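/- arXiv:1005.1099 — 4 statements merged into one kernel-verified Lean document; each statement's English description precedes it below -/
import Mathlib

section
/- Assume the exponential moment condition (EM). Write a for the p×p matrix with columns a¹,…,a^p, and define c(x) = A⁰ + Σ_{i=1}^p x_i Aⁱ, K(x,·) = K⁰ + Σ_{i=1}^p x_i Kⁱ, and k(x,y) = ½ yᵀ c(x) y + ∫ (e^{y·z} − 1 − y·z) K(x,dz). Let u ∈ ℝ^p, T ∈ (0,∞], and let (ψ₀, ψ) : [0,T) → ℝ × ℝ^p be continuously differentiable with ψ₀(0) = 0, ψ(0) = u, ψ₀'(t) = R₀(ψ(t)) and ψᵢ'(t) = Rᵢ(ψ(t)) for i = 1,…,p. Let f(t,x) denote the solution of the linear ODE x' = a⁰ + a x with f(0,x) = x. Then for every x ∈ ℝ^p and every t ∈ [0,T): ψ₀(t) + ψ(t)·x = u·f(t,x) + ∫₀ᵗ k(f(t−s,x), ψ(s)) ds. -/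
open MeasureTheory RealInnerProductSpace intervalIntegral
open scoped ENNReal

noncomputable section

/-- Integration of a real function against a signed measure: the difference of the integrals
against the positive and negative parts of its Jordan decomposition. -/
def signedIntegral {α : Type*} [MeasurableSpace α] (μ : SignedMeasure α) (f : α → ℝ) : ℝ :=
  ∫ z, f z ∂μ.toJordanDecomposition.posPart - ∫ z, f z ∂μ.toJordanDecomposition.negPart

/-- The functions `Rᵢ(y) = y·aⁱ + ½ yᵀAⁱy + ∫ (e^{y·z} − 1 − y·z) Kⁱ(dz)`, `i = 0,…,p`. -/
def Ric {p : ℕ} (a : Fin (p + 1) → EuclideanSpace ℝ (Fin p))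
    (A : Fin (p + 1) → Matrix (Fin p) (Fin p) ℝ)
    (K : Fin (p + 1) → SignedMeasure (EuclideanSpace ℝ (Fin p)))
    (i : Fin (p + 1)) (y : EuclideanSpace ℝ (Fin p)) : ℝ :=
  ⟪y, a i⟫ + (1 / 2) * ∑ k, ∑ l, y k * A i k l * y l
    + signedIntegral (K i) fun z => Real.exp ⟪y, z⟫ - 1 - ⟪y, z⟫

/-- The affine combination `K(x,·) = K⁰ + Σᵢ xᵢ Kⁱ` of the signed jump measures. -/
def Kaff {p : ℕ} (K : Fin (p + 1) → SignedMeasure (EuclideanSpace ℝ (Fin p)))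
    (x : EuclideanSpace ℝ (Fin p)) : SignedMeasure (EuclideanSpace ℝ (Fin p)) :=
  K 0 + ∑ i : Fin p, x i • K i.succ

/-- `k(x,y) = ½ yᵀ c(x) y + ∫ (e^{y·z} − 1 − y·z) K(x,dz)` with
`c(x) = A⁰ + Σᵢ xᵢ Aⁱ` and `K(x,·) = K⁰ + Σᵢ xᵢ Kⁱ`. -/
def kxy {p : ℕ} (A : Fin (p + 1) → Matrix (Fin p) (Fin p) ℝ)
    (K : Fin (p + 1) → SignedMeasure (EuclideanSpace ℝ (Fin p)))
    (x y : EuclideanSpace ℝ (Fin p)) : ℝ :=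
  (1 / 2) * ∑ k, ∑ l, y k * (A 0 + ∑ i : Fin p, x i • A i.succ) k l * y l
    + signedIntegral (Kaff K x) fun z => Real.exp ⟪y, z⟫ - 1 - ⟪y, z⟫


/-! Along the backward flow `w(s) = f(t - s, x)` consider `F(s) = ψ₀(s) + ψ(s)·w(s)`, so that
`F(0) = u·f(t,x)` and `F(t) = ψ₀(t) + ψ(t)·x`. Differentiating with the Riccati equations and
`w' = -(a⁰ + a w)`, the drift terms `ψ·a⁰` and `ψ·(a w)` cancel, and the remaining
`R₀(ψ) + Σᵢ wᵢ Rᵢ(ψ)` is `k(w, ψ)` because `c(x)` and `K(x,·)` are affine in `x`. The fundamental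
theorem of calculus then gives the identity. The exponential moment condition makes the jump
integrals finite, linear in the measure and continuous in `y`, so the integrand `k(w(s), ψ(s))` is
continuous. -/

theorem MeasureTheory.SignedMeasure.integrable_totalVariation_iff {α : Type*} [MeasurableSpace α]
    {μ : SignedMeasure α} {f : α → ℝ} :
    Integrable f μ.totalVariation ↔ μ.Integrable f := by
  rw [μ.totalVariation_eq_variation]

theorem signedIntegral_eq_integral_vectorMeasure {α : Type*} [MeasurableSpace α]
    {μ : SignedMeasure α} {f : α → ℝ} (hf : Integrable f μ.totalVariation) :
    signedIntegral μ f = ∫ᵛ z, f z ∂<•μ := by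
  have hP : Integrable f μ.toJordanDecomposition.posPart :=
    hf.mono_measure (Measure.le_add_right le_rfl)
  have hN : Integrable f μ.toJordanDecomposition.negPart :=
    hf.mono_measure (Measure.le_add_left le_rfl)
  conv_rhs => rw [← μ.toSignedMeasure_toJordanDecomposition]
  rw [JordanDecomposition.toSignedMeasure, VectorMeasure.integral_sub_vectorMeasure
    (by rwa [VectorMeasure.Integrable, Measure.variation_toSignedMeasure])
    (by rwa [VectorMeasure.Integrable, Measure.variation_toSignedMeasure])]
  simp [signedIntegral]

theorem signedIntegral_Kaff {p : ℕ} (K : Fin (p + 1) → SignedMeasure (EuclideanSpace ℝ (Fin p)))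
    (x : EuclideanSpace ℝ (Fin p)) {f : EuclideanSpace ℝ (Fin p) → ℝ}
    (hf : ∀ i, Integrable f (K i).totalVariation) :
    signedIntegral (Kaff K x) f
      = signedIntegral (K 0) f + ∑ i : Fin p, x i * signedIntegral (K i.succ) f := by
  simp only [SignedMeasure.integrable_totalVariation_iff] at hf
  have hsmul (i : Fin p) : (x i • K i.succ).Integrable f := (hf i.succ).smul_vectorMeasure _
  have hsum : (∑ i : Fin p, x i • K i.succ).Integrable f :=
    VectorMeasure.Integrable.finsetSum_vectorMeasure fun i _ => hsmul i
  have hK : (Kaff K x).Integrable f := (hf 0).add_vectorMeasure hsum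
  simp only [signedIntegral_eq_integral_vectorMeasure,
    SignedMeasure.integrable_totalVariation_iff.2, hf, hK]
  rw [Kaff, VectorMeasure.integral_add_vectorMeasure (hf 0) hsum,
    VectorMeasure.integral_finsetSum_vectorMeasure fun i _ => hsmul i]
  simp

section ExpMoments

variable {q : ℕ}

def HasExpMoments (m : Measure (EuclideanSpace ℝ (Fin q))) : Prop :=
  ∀ k : EuclideanSpace ℝ (Fin q),
    ∫⁻ z in {z : EuclideanSpace ℝ (Fin q) | 1 < ‖z‖}, ENNReal.ofReal (Real.exp ⟪k, z⟫) ∂m < ⊤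

def signVector (b : Fin q → Bool) : EuclideanSpace ℝ (Fin q) :=
  WithLp.toLp 2 fun i => if b i then 1 else -1

theorem norm_le_inner_signVector (z : EuclideanSpace ℝ (Fin q)) :
    ‖z‖ ≤ ⟪signVector fun i => decide (0 ≤ z i), z⟫ := by
  have hsum : ⟪signVector fun i => decide (0 ≤ z i), z⟫ = ∑ i, ‖z i‖ := by
    simp only [PiLp.inner_apply, signVector, RCLike.inner_apply, conj_trivial]
    refine Finset.sum_congr rfl fun i _ => ?_
    rcases le_or_gt 0 (z i) with h | h
    · simp [h, abs_of_nonneg h]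
    · simp [not_le.2 h, abs_of_neg h]
  calc ‖z‖ = ‖∑ i, z i • EuclideanSpace.single i (1 : ℝ)‖ := by
        congr 1; ext i; simp [Pi.single_apply]
    _ ≤ ∑ i, ‖z i • EuclideanSpace.single i (1 : ℝ)‖ := norm_sum_le _ _
    _ = _ := by simp [hsum, norm_smul]

/-- Since `‖z‖ ≤ ‖z‖₁ = maxᵦ ⟪signVector b, z⟫`, the finitely many exponentials on the right
dominate `exp ⟪y, z⟫` uniformly for `y` near `c`. -/
theorem exp_inner_le_sum_exp_inner_add_signVector {c y : EuclideanSpace ℝ (Fin q)}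
    (hy : ‖y - c‖ ≤ 1) (z : EuclideanSpace ℝ (Fin q)) :
    Real.exp ⟪y, z⟫ ≤ ∑ b : Fin q → Bool, Real.exp ⟪c + signVector b, z⟫ := by
  set b₀ : Fin q → Bool := fun i => decide (0 ≤ z i)
  have hle : ⟪y, z⟫ ≤ ⟪c + signVector b₀, z⟫ := calc
    ⟪y, z⟫ = ⟪c, z⟫ + ⟪y - c, z⟫ := by rw [inner_sub_left]; ring
    _ ≤ ⟪c, z⟫ + ‖y - c‖ * ‖z‖ := by gcongr; exact real_inner_le_norm _ _
    _ ≤ ⟪c, z⟫ + ‖z‖ := by gcongr; exact mul_le_of_le_one_left (norm_nonneg _) hy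
    _ ≤ ⟪c + signVector b₀, z⟫ := by
      rw [inner_add_left]; gcongr; exact norm_le_inner_signVector z
  calc Real.exp ⟪y, z⟫ ≤ Real.exp ⟪c + signVector b₀, z⟫ := Real.exp_le_exp.2 hle
    _ ≤ _ := Finset.single_le_sum (f := fun b => Real.exp ⟪c + signVector b, z⟫)
      (fun b _ => (Real.exp_pos _).le) (Finset.mem_univ b₀)

variable {m : Measure (EuclideanSpace ℝ (Fin q))} [IsFiniteMeasure m]

theorem HasExpMoments.integrable_exp_inner (hm : HasExpMoments m)
    (y : EuclideanSpace ℝ (Fin q)) :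
    Integrable (fun z => Real.exp ⟪y, z⟫) m := by
  have hmeas : AEStronglyMeasurable (fun z => Real.exp ⟪y, z⟫) m := by fun_prop
  rw [← integrableOn_univ, ← Set.union_compl_self {z : EuclideanSpace ℝ (Fin q) | 1 < ‖z‖}]
  refine IntegrableOn.union ⟨hmeas.restrict, ?_⟩ ?_
  · rw [hasFiniteIntegral_iff_ofReal (.of_forall fun z => (Real.exp_pos _).le)]
    exact hm y
  · refine (integrable_const (Real.exp ‖y‖)).mono' hmeas.restrict ?_
    rw [ae_restrict_iff' (measurableSet_lt measurable_const measurable_norm).compl]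
    refine .of_forall fun z (hz : ¬ 1 < ‖z‖) => ?_
    rw [Real.norm_of_nonneg (Real.exp_pos _).le, Real.exp_le_exp]
    calc ⟪y, z⟫ ≤ ‖y‖ * ‖z‖ := real_inner_le_norm _ _
      _ ≤ ‖y‖ := mul_le_of_le_one_right (norm_nonneg _) (not_lt.1 hz)

theorem abs_exp_sub_one_sub_le (x : ℝ) : |Real.exp x - 1 - x| ≤ Real.exp x + Real.exp (-x) := by
  have h₁ := Real.add_one_le_exp x
  have h₂ := Real.add_one_le_exp (-x)
  rw [abs_of_nonneg (by linarith)]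
  linarith [Real.exp_pos x]

theorem HasExpMoments.integrable_exp_inner_sub_one_sub_inner (hm : HasExpMoments m)
    (y : EuclideanSpace ℝ (Fin q)) :
    Integrable (fun z => Real.exp ⟪y, z⟫ - 1 - ⟪y, z⟫) m := by
  refine ((hm.integrable_exp_inner y).add (hm.integrable_exp_inner (-y))).mono'
    (by fun_prop) (.of_forall fun z => ?_)
  simpa [inner_neg_left] using abs_exp_sub_one_sub_le ⟪y, z⟫

theorem continuous_signedIntegral_exp_inner_sub_one_sub_inner
    {μ : SignedMeasure (EuclideanSpace ℝ (Fin q))} (hμ : HasExpMoments μ.totalVariation) :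
    Continuous fun y => signedIntegral μ fun z => Real.exp ⟪y, z⟫ - 1 - ⟪y, z⟫ := by
  simp_rw [signedIntegral_eq_integral_vectorMeasure
    (hμ.integrable_exp_inner_sub_one_sub_inner _)]
  refine continuous_iff_continuousAt.2 fun y₀ => VectorMeasure.continuousAt_of_dominated
    (bound := fun z => ∑ b, (Real.exp ⟪y₀ + signVector b, z⟫ + Real.exp ⟪-y₀ + signVector b, z⟫))
    (.of_forall fun y => by fun_prop) ?_ ?_ (.of_forall fun z => by fun_prop)
  · filter_upwards [Metric.closedBall_mem_nhds y₀ one_pos] with y hy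
    refine .of_forall fun z => (abs_exp_sub_one_sub_le _).trans ?_
    rw [Finset.sum_add_distrib, ← inner_neg_left]
    have hy' : ‖-y - -y₀‖ ≤ 1 := by rwa [← neg_sub', norm_neg, ← dist_eq_norm]
    exact add_le_add (exp_inner_le_sum_exp_inner_add_signVector hy z)
      (exp_inner_le_sum_exp_inner_add_signVector hy' z)
  · rw [← SignedMeasure.totalVariation_eq_variation]
    exact integrable_finsetSum _ fun b _ =>
      (hμ.integrable_exp_inner _).add (hμ.integrable_exp_inner _)

end ExpMoments

theorem sum_sum_mul_add_sum_smul_apply_mul {ι n R : Type*} [Fintype ι] [Fintype n] [CommRing R]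
    (M₀ : Matrix n n R) (M : ι → Matrix n n R) (w : ι → R) (y : n → R) :
    ∑ k, ∑ l, y k * (M₀ + ∑ i, w i • M i) k l * y l
      = ∑ k, ∑ l, y k * M₀ k l * y l + ∑ i, w i * ∑ k, ∑ l, y k * M i k l * y l := by
  simp only [Matrix.add_apply, Matrix.sum_apply, Matrix.smul_apply, smul_eq_mul, mul_add, add_mul,
    Finset.sum_add_distrib, Finset.mul_sum, Finset.sum_mul]
  congr 1
  rw [Finset.sum_comm_cycle]
  exact Finset.sum_congr rfl fun _ _ => Finset.sum_congr rfl fun _ _ =>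
    Finset.sum_congr rfl fun _ _ => by ring

theorem EuclideanSpace.real_inner_eq_sum_mul {ι : Type*} [Fintype ι] (y z : EuclideanSpace ℝ ι) :
    ⟪y, z⟫ = ∑ i, y i * z i := by
  simp [PiLp.inner_apply, mul_comm]

theorem EuclideanSpace.continuousOn_iff_apply {α ι : Type*} [TopologicalSpace α] [Fintype ι]
    {f : α → EuclideanSpace ℝ ι} {S : Set α} :
    ContinuousOn f S ↔ ∀ i, ContinuousOn (fun s => f s i) S :=
  ⟨fun h i => (PiLp.continuous_apply 2 _ i).comp_continuousOn h,
    fun h => (PiLp.continuous_toLp 2 _).comp_continuousOn (continuousOn_pi.2 h)⟩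

theorem Ric_zero_add_sum_eq_kxy {p : ℕ} (a : Fin (p + 1) → EuclideanSpace ℝ (Fin p))
    (A : Fin (p + 1) → Matrix (Fin p) (Fin p) ℝ)
    (K : Fin (p + 1) → SignedMeasure (EuclideanSpace ℝ (Fin p)))
    (w y : EuclideanSpace ℝ (Fin p))
    (hK : ∀ i, Integrable (fun z => Real.exp ⟪y, z⟫ - 1 - ⟪y, z⟫) (K i).totalVariation) :
    Ric a A K 0 y + ∑ i : Fin p,
        (Ric a A K i.succ y * w i + y i * -(a 0 i + ∑ j : Fin p, a j.succ i * w j))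
      = kxy A K w y := by
  unfold Ric kxy
  rw [signedIntegral_Kaff K w hK, sum_sum_mul_add_sum_smul_apply_mul]
  set I : Fin (p + 1) → ℝ := fun i => signedIntegral (K i) fun z => Real.exp ⟪y, z⟫ - 1 - ⟪y, z⟫
  set Q : Fin (p + 1) → ℝ := fun i => ∑ k, ∑ l, y k * A i k l * y l
  have hdrift :
      ∑ i : Fin p, ⟪y, a i.succ⟫ * w i = ∑ i : Fin p, y i * ∑ j : Fin p, a j.succ i * w j := by
    simp only [EuclideanSpace.real_inner_eq_sum_mul, Finset.sum_mul, Finset.mul_sum]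
    rw [Finset.sum_comm]
    exact Finset.sum_congr rfl fun _ _ => Finset.sum_congr rfl fun _ _ => by ring
  have hQ : ∑ i : Fin p, 1 / 2 * Q i.succ * w i = 1 / 2 * ∑ i : Fin p, w i * Q i.succ := by
    rw [Finset.mul_sum]; exact Finset.sum_congr rfl fun _ _ => by ring
  have hI : ∑ i : Fin p, I i.succ * w i = ∑ i : Fin p, w i * I i.succ :=
    Finset.sum_congr rfl fun _ _ => mul_comm _ _
  simp only [add_mul, mul_neg, mul_add, Finset.sum_add_distrib, Finset.sum_neg_distrib]
  rw [EuclideanSpace.real_inner_eq_sum_mul y (a 0)]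
  linear_combination hdrift + hQ + hI

theorem continuous_kxy {p : ℕ} (A : Fin (p + 1) → Matrix (Fin p) (Fin p) ℝ)
    (K : Fin (p + 1) → SignedMeasure (EuclideanSpace ℝ (Fin p)))
    (hK : ∀ i, HasExpMoments (K i).totalVariation) :
    Continuous fun v : EuclideanSpace ℝ (Fin p) × EuclideanSpace ℝ (Fin p) =>
      kxy A K v.1 v.2 := by
  have hI (i) := (continuous_signedIntegral_exp_inner_sub_one_sub_inner (hK i)).comp
    (continuous_snd (X := EuclideanSpace ℝ (Fin p)))
  simp only [kxy, sum_sum_mul_add_sum_smul_apply_mul,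
    signedIntegral_Kaff K _ fun i => (hK i).integrable_exp_inner_sub_one_sub_inner _]
  fun_prop

theorem hasDerivAt_add_sum_mul_of_riccati {p : ℕ} {a : Fin (p + 1) → EuclideanSpace ℝ (Fin p)}
    {A : Fin (p + 1) → Matrix (Fin p) (Fin p) ℝ}
    {K : Fin (p + 1) → SignedMeasure (EuclideanSpace ℝ (Fin p))}
    (hK : ∀ i, HasExpMoments (K i).totalVariation) {ψ₀ : ℝ → ℝ}
    {ψ w : ℝ → EuclideanSpace ℝ (Fin p)} {s : ℝ}
    (hψ₀ : HasDerivAt ψ₀ (Ric a A K 0 (ψ s)) s)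
    (hψ : ∀ i : Fin p, HasDerivAt (fun r => ψ r i) (Ric a A K i.succ (ψ s)) s)
    (hw : ∀ i : Fin p, HasDerivAt (fun r => w r i) (-(a 0 i + ∑ j, a j.succ i * w s j)) s) :
    HasDerivAt (fun r => ψ₀ r + ∑ i, ψ r i * w r i) (kxy A K (w s) (ψ s)) s := by
  rw [← Ric_zero_add_sum_eq_kxy a A K (w s) (ψ s)
    fun i => (hK i).integrable_exp_inner_sub_one_sub_inner _]
  exact hψ₀.add (HasDerivAt.fun_sum fun i _ => (hψ i).mul (hw i))

theorem integral_kxy_eq_sub_of_riccati {p : ℕ} {a : Fin (p + 1) → EuclideanSpace ℝ (Fin p)}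
    {A : Fin (p + 1) → Matrix (Fin p) (Fin p) ℝ}
    {K : Fin (p + 1) → SignedMeasure (EuclideanSpace ℝ (Fin p))}
    (hK : ∀ i, HasExpMoments (K i).totalVariation) {ψ₀ : ℝ → ℝ}
    {ψ w : ℝ → EuclideanSpace ℝ (Fin p)} {t : ℝ} (ht : 0 ≤ t)
    (hψ₀c : ContinuousOn ψ₀ (Set.Icc 0 t)) (hψc : ContinuousOn ψ (Set.Icc 0 t))
    (hwc : ContinuousOn w (Set.Icc 0 t))
    (hψ₀ : ∀ s ∈ Set.Ioo 0 t, HasDerivAt ψ₀ (Ric a A K 0 (ψ s)) s)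
    (hψ : ∀ s ∈ Set.Ioo 0 t, ∀ i : Fin p,
      HasDerivAt (fun r => ψ r i) (Ric a A K i.succ (ψ s)) s)
    (hw : ∀ s ∈ Set.Ioo 0 t, ∀ i : Fin p,
      HasDerivAt (fun r => w r i) (-(a 0 i + ∑ j, a j.succ i * w s j)) s) :
    ∫ s in (0 : ℝ)..t, kxy A K (w s) (ψ s)
      = (ψ₀ t + ∑ i, ψ t i * w t i) - (ψ₀ 0 + ∑ i, ψ 0 i * w 0 i) := by
  have hkc : ContinuousOn (fun s => kxy A K (w s) (ψ s)) (Set.Icc 0 t) :=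
    (continuous_kxy A K hK).comp_continuousOn' (f := fun s => (w s, ψ s)) (hwc.prodMk hψc)
  exact intervalIntegral.integral_eq_sub_of_hasDeriv_right_of_le ht
    (f := fun r => ψ₀ r + ∑ i, ψ r i * w r i)
    (hψ₀c.add (continuousOn_finsetSum _ fun i _ =>
      (EuclideanSpace.continuousOn_iff_apply.1 hψc i).mul
        (EuclideanSpace.continuousOn_iff_apply.1 hwc i)))
    (fun s hs => (hasDerivAt_add_sum_mul_of_riccati hK (hψ₀ s hs) (hψ s hs)
      (hw s hs)).hasDerivWithinAt)
    (hkc.intervalIntegrable_of_Icc ht)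

theorem setOf_nonneg_and_ofReal_lt_mem_nhds {T : ℝ≥0∞} {s : ℝ} (hs : 0 < s)
    (hsT : ENNReal.ofReal s < T) : {r : ℝ | 0 ≤ r ∧ ENNReal.ofReal r < T} ∈ nhds s := by
  have hopen : IsOpen {r : ℝ | 0 < r ∧ ENNReal.ofReal r < T} :=
    (isOpen_lt continuous_const continuous_id).inter
      (isOpen_lt ENNReal.continuous_ofReal continuous_const)
  exact Filter.mem_of_superset (hopen.mem_nhds ⟨hs, hsT⟩) fun r hr => ⟨hr.1.le, hr.2⟩

theorem statement2_general {p : ℕ} (a : Fin (p + 1) → EuclideanSpace ℝ (Fin p))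
    (A : Fin (p + 1) → Matrix (Fin p) (Fin p) ℝ)
    (K : Fin (p + 1) → SignedMeasure (EuclideanSpace ℝ (Fin p)))
    (hEM : ∀ (k : EuclideanSpace ℝ (Fin p)) (i : Fin (p + 1)),
      ∫⁻ z in {z : EuclideanSpace ℝ (Fin p) | 1 < ‖z‖},
        ENNReal.ofReal (Real.exp ⟪k, z⟫) ∂(K i).totalVariation < ⊤)
    (u : EuclideanSpace ℝ (Fin p)) (T : ℝ≥0∞)
    (ψ₀ : ℝ → ℝ) (ψ : ℝ → EuclideanSpace ℝ (Fin p))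
    (hψ₀0 : ψ₀ 0 = 0) (hψ0 : ψ 0 = u)
    (hode : ∀ t, 0 ≤ t → ENNReal.ofReal t < T →
      HasDerivWithinAt ψ₀ (Ric a A K 0 (ψ t))
          {s : ℝ | 0 ≤ s ∧ ENNReal.ofReal s < T} t ∧
      ∀ i : Fin p, HasDerivWithinAt (fun s => ψ s i) (Ric a A K i.succ (ψ t))
          {s : ℝ | 0 ≤ s ∧ ENNReal.ofReal s < T} t)
    (g : ℝ → EuclideanSpace ℝ (Fin p) → EuclideanSpace ℝ (Fin p))
    (hg0 : ∀ x, g 0 x = x)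
    (hg : ∀ (t : ℝ) (x : EuclideanSpace ℝ (Fin p)) (i : Fin p),
      HasDerivAt (fun s => g s x i) (a 0 i + ∑ j, a j.succ i * g t x j) t) :
    ∀ (x : EuclideanSpace ℝ (Fin p)) (t : ℝ), 0 ≤ t → ENNReal.ofReal t < T →
      ψ₀ t + ⟪ψ t, x⟫ = ⟪u, g t x⟫ + ∫ s in (0:ℝ)..t, kxy A K (g (t - s) x) (ψ s) := by
  intro x t ht htT
  have hlt {s : ℝ} (hs : s ≤ t) : ENNReal.ofReal s < T := (ENNReal.ofReal_le_ofReal hs).trans_lt htT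
  have hIcc : Set.Icc 0 t ⊆ {s : ℝ | 0 ≤ s ∧ ENNReal.ofReal s < T} := fun s hs => ⟨hs.1, hlt hs.2⟩
  have hnhds (s) (hs : s ∈ Set.Ioo 0 t) := setOf_nonneg_and_ofReal_lt_mem_nhds hs.1 (hlt hs.2.le)
  have hw (s : ℝ) (i : Fin p) :
      HasDerivAt (fun r => g (t - r) x i) (-(a 0 i + ∑ j, a j.succ i * g (t - s) x j)) s := by
    simpa [Function.comp_def] using (hg (t - s) x i).comp s ((hasDerivAt_id s).const_sub t)
  have hFTC := integral_kxy_eq_sub_of_riccati (fun i k => hEM k i) ht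
    (fun s hs => ((hode s (hIcc hs).1 (hIcc hs).2).1.continuousWithinAt).mono hIcc)
    (EuclideanSpace.continuousOn_iff_apply.2 fun i s hs =>
      (((hode s (hIcc hs).1 (hIcc hs).2).2 i).continuousWithinAt).mono hIcc)
    (EuclideanSpace.continuousOn_iff_apply.2 fun i s _ => (hw s i).continuousAt.continuousWithinAt)
    (fun s hs => (hode s hs.1.le (hlt hs.2.le)).1.hasDerivAt (hnhds s hs))
    (fun s hs i => ((hode s hs.1.le (hlt hs.2.le)).2 i).hasDerivAt (hnhds s hs))
    (fun s _ => hw s)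
  simp only [sub_self, sub_zero, hg0, hψ₀0, hψ0, zero_add] at hFTC
  rw [EuclideanSpace.real_inner_eq_sum_mul, EuclideanSpace.real_inner_eq_sum_mul, hFTC]
  ring

/-- Under the exponential moment condition, any solution `(ψ₀, ψ)` of the
generalized Riccati system on `[0,T)` satisfies, for every `x ∈ ℝ^p` and `t ∈ [0,T)`,
`ψ₀(t) + ψ(t)·x = u·f(t,x) + ∫₀ᵗ k(f(t−s,x), ψ(s)) ds`, where `f(·,x)` is the flow of the
linear ODE `x' = a⁰ + a x` (here `g`), `a` being the matrix with columns `a¹,…,a^p`. -/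
theorem statement2 {p : ℕ} (a : Fin (p + 1) → EuclideanSpace ℝ (Fin p))
    (A : Fin (p + 1) → Matrix (Fin p) (Fin p) ℝ) (hA : ∀ i, (A i).IsSymm)
    (K : Fin (p + 1) → SignedMeasure (EuclideanSpace ℝ (Fin p)))
    (hK0 : ∀ i, (K i).totalVariation {0} = 0)
    (hmom : ∀ i, ∫⁻ z, ENNReal.ofReal (min (‖z‖ ^ 2) ‖z‖) ∂(K i).totalVariation < ⊤)
    (hEM : ∀ (k : EuclideanSpace ℝ (Fin p)) (i : Fin (p + 1)),
      ∫⁻ z in {z : EuclideanSpace ℝ (Fin p) | 1 < ‖z‖},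
        ENNReal.ofReal (Real.exp ⟪k, z⟫) ∂(K i).totalVariation < ⊤)
    (u : EuclideanSpace ℝ (Fin p)) (T : ℝ≥0∞) (hT : 0 < T)
    (ψ₀ : ℝ → ℝ) (ψ : ℝ → EuclideanSpace ℝ (Fin p))
    (hψ₀0 : ψ₀ 0 = 0) (hψ0 : ψ 0 = u)
    (hode : ∀ t, 0 ≤ t → ENNReal.ofReal t < T →
      HasDerivWithinAt ψ₀ (Ric a A K 0 (ψ t))
          {s : ℝ | 0 ≤ s ∧ ENNReal.ofReal s < T} t ∧
      ∀ i : Fin p, HasDerivWithinAt (fun s => ψ s i) (Ric a A K i.succ (ψ t))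
          {s : ℝ | 0 ≤ s ∧ ENNReal.ofReal s < T} t)
    (g : ℝ → EuclideanSpace ℝ (Fin p) → EuclideanSpace ℝ (Fin p))
    (hg0 : ∀ x, g 0 x = x)
    (hg : ∀ (t : ℝ) (x : EuclideanSpace ℝ (Fin p)) (i : Fin p),
      HasDerivAt (fun s => g s x i) (a 0 i + ∑ j, a j.succ i * g t x j) t) :
    ∀ (x : EuclideanSpace ℝ (Fin p)) (t : ℝ), 0 ≤ t → ENNReal.ofReal t < T →
      ψ₀ t + ⟪ψ t, x⟫ = ⟪u, g t x⟫ + ∫ s in (0:ℝ)..t, kxy A K (g (t - s) x) (ψ s) :=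
  statement2_general a A K hEM u T ψ₀ ψ hψ₀0 hψ0 hode g hg0 hg

end
end

section
/- Let a⁰ ∈ ℝ^p, let a be a real p×p matrix, let x ∈ ℝ^p, and let g : ℝ → ℝ^p be differentiable with g(0) = x and g'(t) = a⁰ + a g(t) for all t ∈ ℝ. Let à be the (1+p)×(1+p) real block matrix with first row (0, 0ᵀ) and remaining rows (a⁰, a), i.e. Ã(0,0)=0, Ã(0,j)=0 for j≥1, Ã(i,0)=a⁰_i and Ã(i,j)=a_{ij} for i,j≥1. Then for every t ∈ ℝ, the matrix exponential exp(tÃ) applied to the vector (1, x) ∈ ℝ^{1+p} equals (1, g(t)). -/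
/-!
`v t = (1, g t)` solves the autonomous linear system `v' = Ã v`, because the constant first
coordinate feeds `a⁰` into the equation for `g`. By uniqueness of solutions of a Lipschitz ODE,
`v t = exp(tÃ) v 0`, and `v 0 = (1, x)`.
-/

open Matrix

namespace Matrix

section Exp

-- Any norm would do: `NormedSpace.exp` depends only on the topology of the matrix space.
open scoped Matrix.Norms.Operator

variable {n : Type*} [Fintype n] [DecidableEq n]

theorem hasDerivAt_exp_smul_mulVec (A : Matrix n n ℝ) (v₀ : n → ℝ) (t : ℝ) :
    HasDerivAt (fun s : ℝ => NormedSpace.exp (s • A) *ᵥ v₀)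
      (A *ᵥ (NormedSpace.exp (t • A) *ᵥ v₀)) t := by
  rw [mulVec_mulVec]
  exact ((mulVecBilin ℝ ℝ).flip v₀).toContinuousLinearMap.hasFDerivAt.comp_hasDerivAt t
    (hasDerivAt_exp_smul_const' A t)

theorem eq_exp_smul_mulVec_of_hasDerivAt {A : Matrix n n ℝ} {v : ℝ → n → ℝ}
    (hv : ∀ t, HasDerivAt v (A *ᵥ v t) t) (t : ℝ) :
    v t = NormedSpace.exp (t • A) *ᵥ v 0 := by
  have hlip : LipschitzOnWith _ (A *ᵥ ·) Set.univ :=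
    (mulVecLin A).toContinuousLinearMap.lipschitz.lipschitzOnWith
  have hsol := ODE_solution_unique_univ (v := fun _ => (A *ᵥ ·)) (t₀ := 0) (fun _ => hlip)
    (fun t => ⟨hv t, trivial⟩)
    (fun t => ⟨hasDerivAt_exp_smul_mulVec A (v 0) t, trivial⟩) (by simp)
  exact congrFun hsol t

end Exp

theorem mulVec_cons_one_of_blocks {R : Type*} [Semiring R] {p : ℕ} {a0 : Fin p → R}
    {a : Matrix (Fin p) (Fin p) R} {Atil : Matrix (Fin (p + 1)) (Fin (p + 1)) R}
    (hrow0 : ∀ j, Atil 0 j = 0) (hcol0 : ∀ i, Atil i.succ 0 = a0 i)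
    (hblock : ∀ i j, Atil i.succ j.succ = a i j) (y : Fin p → R) :
    Atil *ᵥ Fin.cons 1 y = Fin.cons 0 (a0 + a *ᵥ y) := by
  ext i
  refine Fin.cases ?_ (fun i => ?_) i
  · simp [mulVec, dotProduct, hrow0]
  · simp [mulVec, dotProduct, Fin.sum_univ_succ, hcol0, hblock]

end Matrix

/-- Let `g` solve the linear ODE `g' = a⁰ + a g`, `g(0) = x`, and let `Ã` be
the `(1+p)×(1+p)` block matrix with first row `(0, 0ᵀ)`, first column below it `a⁰` and lower
right block `a`. Then `exp(tÃ) (1, x) = (1, g(t))` for all `t`. -/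
theorem statement3 {p : ℕ} (a0 : Fin p → ℝ) (a : Matrix (Fin p) (Fin p) ℝ)
    (x : Fin p → ℝ) (g : ℝ → Fin p → ℝ)
    (hg0 : g 0 = x)
    (hg : ∀ t : ℝ, HasDerivAt g (fun i => a0 i + ∑ j, a i j * g t j) t)
    (Atil : Matrix (Fin (p + 1)) (Fin (p + 1)) ℝ)
    (hrow0 : ∀ j : Fin (p + 1), Atil 0 j = 0)
    (hcol0 : ∀ i : Fin p, Atil i.succ 0 = a0 i)
    (hblock : ∀ i j : Fin p, Atil i.succ j.succ = a i j) :
    ∀ t : ℝ,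
      (NormedSpace.exp (t • Atil)).mulVec (Fin.cons 1 x) = Fin.cons 1 (g t) := by
  have hv (t : ℝ) :
      HasDerivAt (fun s => (Fin.cons 1 (g s) : Fin (p + 1) → ℝ))
        (Atil *ᵥ Fin.cons 1 (g t)) t := by
    rw [mulVec_cons_one_of_blocks hrow0 hcol0 hblock]
    exact (hasDerivAt_const t 1).finCons (hg t)
  intro t
  rw [eq_exp_smul_mulVec_of_hasDerivAt hv t, hg0]
end

section
/- Let O ⊆ ℝ^p be an open set and ν a finite (nonnegative) measure on ℝ^p such that ∫ e^{u·x} dν(x) < ∞ for all u ∈ O. Then the map z ↦ ∫ e^{z·x} dν(x) (where z·x = Σ zᵢ xᵢ for z ∈ ℂ^p, x ∈ ℝ^p) is well-defined and analytic on the open strip S(O) = {z ∈ ℂ^p : Re z ∈ O}. -/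
/-!
The key estimate is that near every point `u` of `O` one gains a little more than the exponential
moment at `u`: `x ↦ exp (⟪u, x⟫ + δ ‖x‖)` is `ν`-integrable for some `δ > 0`. Indeed a small ball
around `u` lies in the convex hull of finitely many points of `O`, and by convexity of
`v ↦ exp ⟪v, x⟫` the integrand is bounded by the sum of the exponentials at those points.
With this margin, expanding `exp (z·x) = exp (z₀·x) ∑ₙ ((z - z₀)·x)ⁿ / n!` and integrating term by
term is justified by dominated convergence, which gives a convergent power series at each `z₀`.
-/

open Filter MeasureTheory RealInnerProductSpace Topology
open scoped NNReal Nat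

lemma real_inner_add_div_norm_smul_self {E : Type*} [NormedAddCommGroup E] [InnerProductSpace ℝ E]
    (u x : E) (δ : ℝ) : ⟪u + (δ / ‖x‖) • x, x⟫ = ⟪u, x⟫ + δ * ‖x‖ := by
  rcases eq_or_ne x 0 with rfl | hx
  · simp
  · rw [inner_add_left, real_inner_smul_left, real_inner_self_eq_norm_sq]
    field_simp

theorem exists_integrable_exp_inner_add_mul_norm {E : Type*} [NormedAddCommGroup E]
    [InnerProductSpace ℝ E] [FiniteDimensional ℝ E] [MeasurableSpace E] [BorelSpace E]
    {μ : Measure E} {O : Set E} {u : E} (hO : O ∈ 𝓝 u)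
    (hint : ∀ v ∈ O, Integrable (fun x => Real.exp ⟪v, x⟫) μ) :
    ∃ δ > 0, Integrable (fun x => Real.exp (⟪u, x⟫ + δ * ‖x‖)) μ := by
  obtain ⟨b, hu, hbO⟩ := exists_mem_interior_convexHull_affineBasis hO
  obtain ⟨δ, hδ, hball⟩ := Metric.mem_nhds_iff.1 (mem_interior_iff_mem_nhds.1 hu)
  refine ⟨δ / 2, by positivity, ?_⟩
  have hbound : ∀ x, Real.exp (⟪u, x⟫ + δ / 2 * ‖x‖) ≤ ∑ i, Real.exp ⟪b i, x⟫ := by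
    intro x
    have hmem : u + (δ / 2 / ‖x‖) • x ∈ convexHull ℝ (Set.range b) := by
      refine hball ?_
      rw [Metric.mem_ball, dist_self_add_left, norm_smul, Real.norm_eq_abs, abs_div, abs_norm]
      rcases eq_or_ne x 0 with rfl | hx
      · simpa using hδ
      · rw [div_mul_cancel₀ _ (norm_ne_zero_iff.2 hx), abs_of_pos (half_pos hδ)]
        exact half_lt_self hδ
    have hconv : ConvexOn ℝ Set.univ fun v : E => Real.exp ⟪v, x⟫ :=
      convexOn_exp.comp_linearMap ((innerₛₗ ℝ).flip x)
    obtain ⟨_, ⟨i, rfl⟩, hi⟩ := hconv.exists_ge_of_mem_convexHull (Set.subset_univ _) hmem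
    rw [← real_inner_add_div_norm_smul_self]
    exact hi.trans (Finset.single_le_sum (f := fun j => Real.exp ⟪b j, x⟫)
      (fun j _ => (Real.exp_pos _).le) (Finset.mem_univ i))
  have hsum : Integrable (fun x => ∑ i, Real.exp ⟪b i, x⟫) μ :=
    integrable_finsetSum _ fun i _ => hint _ (hbO (subset_convexHull ℝ _ ⟨i, rfl⟩))
  refine hsum.mono' (by fun_prop) (ae_of_all _ fun x => ?_)
  rw [Real.norm_of_nonneg (Real.exp_pos _).le]
  exact hbound x

namespace ContinuousLinearMap

variable {𝕜 E : Type*} [NontriviallyNormedField 𝕜] [NormedAddCommGroup E] [NormedSpace 𝕜 E]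

noncomputable def dualPow (ℓ : StrongDual 𝕜 E) (n : ℕ) :
    ContinuousMultilinearMap 𝕜 (fun _ : Fin n => E) 𝕜 :=
  (ContinuousMultilinearMap.mkPiAlgebraFin 𝕜 n 𝕜).compContinuousLinearMap fun _ => ℓ

@[simp]
lemma dualPow_apply_const (ℓ : StrongDual 𝕜 E) (n : ℕ) (y : E) :
    ℓ.dualPow n (fun _ => y) = ℓ y ^ n := by
  simp [dualPow]

lemma norm_dualPow_le (ℓ : StrongDual 𝕜 E) (n : ℕ) : ‖ℓ.dualPow n‖ ≤ ‖ℓ‖ ^ n := by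
  simpa [dualPow] using ContinuousMultilinearMap.norm_compContinuousLinearMap_le
    (ContinuousMultilinearMap.mkPiAlgebraFin 𝕜 n 𝕜) fun _ => ℓ

lemma continuous_dualPow (n : ℕ) : Continuous fun ℓ : StrongDual 𝕜 E => ℓ.dualPow n :=
  (ContinuousMultilinearMap.mkPiAlgebraFin 𝕜 n 𝕜).compContinuousLinearMapLRight.cont.comp
    (continuous_pi fun _ => continuous_id)

end ContinuousLinearMap

section ExpMomentSeries

variable {X E : Type*} [MeasurableSpace X] {μ : Measure X} [NormedAddCommGroup E]
  [NormedSpace ℂ E] {g : X → ℂ} {ℓ : X → StrongDual ℂ E}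

noncomputable def expMomentSeries (μ : Measure X) (g : X → ℂ) (ℓ : X → StrongDual ℂ E) :
    FormalMultilinearSeries ℂ E ℂ := fun n =>
  ((n ! : ℂ)⁻¹) • ∫ x, g x • (ℓ x).dualPow n ∂μ

lemma norm_smul_dualPow_mul_le (a : ℂ) (ℓ : StrongDual ℂ E) (r : ℝ≥0) (n : ℕ) :
    ‖a • ℓ.dualPow n‖ * (r ^ n / n !) ≤ ‖a‖ * Real.exp (r * ‖ℓ‖) := by
  rw [norm_smul, mul_assoc]
  gcongr
  calc ‖ℓ.dualPow n‖ * (r ^ n / n !) ≤ ‖ℓ‖ ^ n * (r ^ n / n !) := by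
        gcongr; exact ℓ.norm_dualPow_le n
    _ = (r * ‖ℓ‖) ^ n / n ! := by ring
    _ ≤ Real.exp (r * ‖ℓ‖) := Real.pow_div_factorial_le_exp _ (by positivity) n

lemma integrable_smul_dualPow {r : ℝ≥0} (hg : AEStronglyMeasurable g μ)
    (hℓ : AEStronglyMeasurable ℓ μ) (hr : 0 < r)
    (hint : Integrable (fun x => ‖g x‖ * Real.exp (r * ‖ℓ x‖)) μ) (n : ℕ) :
    Integrable (fun x => g x • (ℓ x).dualPow n) μ := by
  have hrn : (0 : ℝ) < r ^ n / n ! := by positivity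
  refine (hint.const_mul (r ^ n / n ! : ℝ)⁻¹).mono'
    (hg.smul ((ContinuousLinearMap.continuous_dualPow n).comp_aestronglyMeasurable hℓ))
    (ae_of_all _ fun x => ?_)
  rw [inv_mul_eq_div, le_div_iff₀ hrn]
  exact norm_smul_dualPow_mul_le (g x) (ℓ x) r n

lemma norm_expMomentSeries_mul_pow_le {r : ℝ≥0}
    (hint : Integrable (fun x => ‖g x‖ * Real.exp (r * ‖ℓ x‖)) μ) (n : ℕ) :
    ‖expMomentSeries μ g ℓ n‖ * r ^ n ≤ ∫ x, ‖g x‖ * Real.exp (r * ‖ℓ x‖) ∂μ :=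
  calc ‖expMomentSeries μ g ℓ n‖ * r ^ n
      = ‖∫ x, g x • (ℓ x).dualPow n ∂μ‖ * (r ^ n / n !) := by
        rw [expMomentSeries, norm_smul, norm_inv, Complex.norm_natCast]; ring
    _ ≤ (∫ x, ‖g x • (ℓ x).dualPow n‖ ∂μ) * (r ^ n / n !) := by
        gcongr; exact norm_integral_le_integral_norm _
    _ = ∫ x, ‖g x • (ℓ x).dualPow n‖ * (r ^ n / n !) ∂μ :=
        (integral_mul_const (r ^ n / n ! : ℝ) _).symm
    _ ≤ ∫ x, ‖g x‖ * Real.exp (r * ‖ℓ x‖) ∂μ :=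
        integral_mono_of_nonneg (ae_of_all _ fun x => by positivity) hint
          (ae_of_all _ fun x => norm_smul_dualPow_mul_le (g x) (ℓ x) r n)

lemma expMomentSeries_apply_const {r : ℝ≥0} (hg : AEStronglyMeasurable g μ)
    (hℓ : AEStronglyMeasurable ℓ μ) (hr : 0 < r)
    (hint : Integrable (fun x => ‖g x‖ * Real.exp (r * ‖ℓ x‖)) μ) (n : ℕ) (y : E) :
    expMomentSeries μ g ℓ n (fun _ => y) = ∫ x, g x * (ℓ x y ^ n / n !) ∂μ := by
  rw [expMomentSeries, smul_apply,
    ContinuousMultilinearMap.integral_apply (integrable_smul_dualPow hg hℓ hr hint n),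
    smul_eq_mul, ← integral_const_mul]
  congr 1 with x
  simp only [smul_apply, ContinuousLinearMap.dualPow_apply_const, smul_eq_mul]
  ring

theorem hasFPowerSeriesOnBall_integral_mul_cexp {r : ℝ≥0} (hg : AEStronglyMeasurable g μ)
    (hℓ : AEStronglyMeasurable ℓ μ) (hr : 0 < r)
    (hint : Integrable (fun x => ‖g x‖ * Real.exp (r * ‖ℓ x‖)) μ) :
    HasFPowerSeriesOnBall (fun y => ∫ x, g x * Complex.exp (ℓ x y) ∂μ)
      (expMomentSeries μ g ℓ) 0 r where
  r_le := (expMomentSeries μ g ℓ).le_radius_of_bound _ (norm_expMomentSeries_mul_pow_le hint)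
  r_pos := by simpa using hr
  hasSum {y} hy := by
    have hy : ‖y‖ ≤ r := by
      rw [Metric.mem_eball, edist_zero_right, enorm_eq_nnnorm, ENNReal.coe_lt_coe] at hy
      exact_mod_cast hy.le
    simp_rw [expMomentSeries_apply_const hg hℓ hr hint, zero_add]
    have hℓy : ∀ x, ‖ℓ x y‖ ≤ r * ‖ℓ x‖ := fun x =>
      ((ℓ x).le_opNorm y).trans (by rw [mul_comm]; gcongr)
    refine hasSum_integral_of_dominated_convergence (fun n x => ‖g x‖ * ((r * ‖ℓ x‖) ^ n / n !))
      (fun n => ?_) (fun n => ae_of_all _ fun x => ?_) (ae_of_all _ fun x => ?_) ?_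
      (ae_of_all _ fun x => ?_)
    · fun_prop
    · rw [norm_mul, norm_div, norm_pow, Complex.norm_natCast]
      gcongr
      exact hℓy x
    · exact (Real.summable_pow_div_factorial _).mul_left _
    · have hsum : ∀ x, ∑' n, ‖g x‖ * ((r * ‖ℓ x‖) ^ n / n !) = ‖g x‖ * Real.exp (r * ‖ℓ x‖) :=
        fun x => by rw [tsum_mul_left, Real.exp_eq_exp_ℝ,
          (NormedSpace.expSeries_div_hasSum_exp _).tsum_eq]
      simpa only [hsum] using hint
    · rw [Complex.exp_eq_exp_ℂ]
      exact (NormedSpace.expSeries_div_hasSum_exp (ℓ x y)).mul_left (g x)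

theorem analyticAt_integral_cexp {z₀ : E} {r : ℝ} (hℓ : AEStronglyMeasurable ℓ μ) (hr : 0 < r)
    (hint : Integrable (fun x => Real.exp ((ℓ x z₀).re + r * ‖ℓ x‖)) μ) :
    AnalyticAt ℂ (fun z => ∫ x, Complex.exp (ℓ x z) ∂μ) z₀ := by
  have hg : AEStronglyMeasurable (fun x => Complex.exp (ℓ x z₀)) μ := by fun_prop
  have hint' : Integrable
      (fun x => ‖Complex.exp (ℓ x z₀)‖ * Real.exp (r.toNNReal * ‖ℓ x‖)) μ := by
    simpa only [Complex.norm_exp, Real.coe_toNNReal _ hr.le, ← Real.exp_add] using hint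
  have hF := (hasFPowerSeriesOnBall_integral_mul_cexp hg hℓ (Real.toNNReal_pos.2 hr)
    hint').comp_sub z₀
  rw [zero_add] at hF
  refine hF.analyticAt.congr (Eventually.of_forall fun z => ?_)
  simp only [map_sub, ← Complex.exp_add, add_sub_cancel]

end ExpMomentSeries

namespace EuclideanSpace

variable {ι : Type*} [Fintype ι]

noncomputable def complexPairing (x : EuclideanSpace ℝ ι) : StrongDual ℂ (EuclideanSpace ℂ ι) :=
  innerSL ℂ (WithLp.toLp 2 fun i => (x i : ℂ))

lemma complexPairing_apply (x : EuclideanSpace ℝ ι) (z : EuclideanSpace ℂ ι) :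
    complexPairing x z = ∑ i, z i * (x i : ℂ) := by
  simp [complexPairing, PiLp.inner_apply, mul_comm]

lemma re_complexPairing (x : EuclideanSpace ℝ ι) (z : EuclideanSpace ℂ ι) :
    (complexPairing x z).re = ⟪(EuclideanSpace.equiv ι ℝ).symm (fun i => (z i).re), x⟫ := by
  simp [complexPairing_apply, Complex.re_sum, PiLp.inner_apply, mul_comm]

lemma norm_complexPairing (x : EuclideanSpace ℝ ι) : ‖complexPairing x‖ = ‖x‖ := by
  simp [complexPairing, innerSL_apply_norm, EuclideanSpace.norm_eq]

@[fun_prop]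
lemma continuous_complexPairing : Continuous (complexPairing (ι := ι)) := by
  unfold complexPairing
  fun_prop

end EuclideanSpace

theorem statement7_general {p : ℕ} (O : Set (EuclideanSpace ℝ (Fin p))) (hO : IsOpen O)
    (ν : Measure (EuclideanSpace ℝ (Fin p)))
    (hfin : ∀ u ∈ O, ∫⁻ x, ENNReal.ofReal (Real.exp ⟪u, x⟫) ∂ν < ⊤) :
    (∀ z : EuclideanSpace ℂ (Fin p),
        ((EuclideanSpace.equiv (Fin p) ℝ).symm fun i => (z i).re) ∈ O →
        Integrable (fun x : EuclideanSpace ℝ (Fin p) =>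
          Complex.exp (∑ i, z i * (x i : ℂ))) ν) ∧
      AnalyticOnNhd ℂ
        (fun z : EuclideanSpace ℂ (Fin p) =>
          ∫ x, Complex.exp (∑ i, z i * (x i : ℂ)) ∂ν)
        {z : EuclideanSpace ℂ (Fin p) |
          ((EuclideanSpace.equiv (Fin p) ℝ).symm fun i => (z i).re) ∈ O} := by
  have hint : ∀ u ∈ O, Integrable (fun x => Real.exp ⟪u, x⟫) ν := fun u hu =>
    (lintegral_ofReal_ne_top_iff_integrable (by fun_prop)
      (ae_of_all _ fun _ => (Real.exp_pos _).le)).1 (hfin u hu).ne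
  simp_rw [← EuclideanSpace.complexPairing_apply]
  refine ⟨fun z hz => ?_, fun z₀ hz₀ => ?_⟩
  · refine (hint _ hz).mono' (by fun_prop) (ae_of_all _ fun x => ?_)
    rw [Complex.norm_exp, EuclideanSpace.re_complexPairing]
  · obtain ⟨δ, hδ, hδint⟩ := exists_integrable_exp_inner_add_mul_norm (hO.mem_nhds hz₀) hint
    refine analyticAt_integral_cexp
      EuclideanSpace.continuous_complexPairing.aestronglyMeasurable hδ ?_
    simpa only [EuclideanSpace.re_complexPairing, EuclideanSpace.norm_complexPairing] using hδint

/-- If `ν` is a finite measure on `ℝ^p` with `∫ e^{u·x} dν(x) < ∞` for all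
`u` in an open set `O ⊆ ℝ^p`, then `z ↦ ∫ e^{z·x} dν(x)` is well-defined (the integrand is
integrable) and complex-analytic on the open strip `S(O) = {z ∈ ℂ^p : Re z ∈ O}`. -/
theorem statement7 {p : ℕ} (O : Set (EuclideanSpace ℝ (Fin p))) (hO : IsOpen O)
    (ν : Measure (EuclideanSpace ℝ (Fin p))) [IsFiniteMeasure ν]
    (hfin : ∀ u ∈ O, ∫⁻ x, ENNReal.ofReal (Real.exp ⟪u, x⟫) ∂ν < ⊤) :
    (∀ z : EuclideanSpace ℂ (Fin p),
        ((EuclideanSpace.equiv (Fin p) ℝ).symm fun i => (z i).re) ∈ O →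
        Integrable (fun x : EuclideanSpace ℝ (Fin p) =>
          Complex.exp (∑ i, z i * (x i : ℂ))) ν) ∧
      AnalyticOnNhd ℂ
        (fun z : EuclideanSpace ℂ (Fin p) =>
          ∫ x, Complex.exp (∑ i, z i * (x i : ℂ)) ∂ν)
        {z : EuclideanSpace ℂ (Fin p) |
          ((EuclideanSpace.equiv (Fin p) ℝ).symm fun i => (z i).re) ∈ O} :=
  statement7_general O hO ν hfin
end

section
/- Let E ⊆ ℝ^p be self-dual with respect to the Euclidean inner product, i.e. E = {x ∈ ℝ^p : x·y ≥ 0 for all y ∈ E}. Then the topological interior of E equals {x ∈ ℝ^p : x·y > 0 for all y ∈ E with y ≠ 0}. -/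
open RealInnerProductSpace

/-- If `E ⊆ ℝ^p` is self-dual, i.e. `E = {x : x·y ≥ 0 for all y ∈ E}`, then
the interior of `E` is `{x : x·y > 0 for all nonzero y ∈ E}`. -/
theorem statement9 {p : ℕ} (E : Set (EuclideanSpace ℝ (Fin p)))
    (hE : E = {x | ∀ y ∈ E, 0 ≤ ⟪x, y⟫}) :
    interior E = {x | ∀ y ∈ E, y ≠ 0 → 0 < ⟪x, y⟫} := by
  have hmem : ∀ x : EuclideanSpace ℝ (Fin p), x ∈ E ↔ ∀ y ∈ E, 0 ≤ ⟪x, y⟫ := by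
    intro x
    conv_lhs => rw [hE]
    exact Iff.rfl
  have hEc : IsClosed E := by
    have : E = ⋂ y ∈ E, {x : EuclideanSpace ℝ (Fin p) | 0 ≤ ⟪x, y⟫} := by
      ext x; simp [hmem x]
    rw [this]
    exact isClosed_biInter fun y _ =>
      isClosed_le continuous_const (continuous_id.inner continuous_const)
  have hcone : ∀ y ∈ E, ∀ c : ℝ, 0 ≤ c → c • y ∈ E := by
    intro y hy c hc
    rw [hmem]
    intro z hz
    rw [real_inner_smul_left]
    exact mul_nonneg hc ((hmem y).mp hy z hz)
  ext x
  simp only [Set.mem_setOf_eq]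
  constructor
  · intro hx y hy hy0
    by_contra h
    push_neg at h
    obtain ⟨ε, hε, hball⟩ := Metric.isOpen_iff.mp isOpen_interior x hx
    have hny : 0 < ‖y‖ := norm_pos_iff.mpr hy0
    set x' := x - (ε / 2 / ‖y‖) • y with hx'def
    have hx'E : x' ∈ E := by
      apply interior_subset (hball ?_)
      have : dist x' x = ε / 2 := by
        rw [dist_eq_norm, hx'def]
        simp [norm_smul, abs_of_nonneg (le_of_lt (div_pos (half_pos hε) hny)), abs_of_pos hε,
          div_mul_cancel₀ _ (ne_of_gt hny)]
      rw [Metric.mem_ball, this]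
      linarith
    have h1 : 0 ≤ ⟪x', y⟫ := (hmem x').mp hx'E y hy
    have h2 : ⟪x', y⟫ = ⟪x, y⟫ - (ε / 2 / ‖y‖) * (‖y‖ * ‖y‖) := by
      rw [hx'def, inner_sub_left, real_inner_smul_left, real_inner_self_eq_norm_mul_norm]
    have h3 : 0 < (ε / 2 / ‖y‖) * (‖y‖ * ‖y‖) :=
      mul_pos (div_pos (half_pos hε) hny) (mul_pos hny hny)
    linarith
  · intro hx
    by_cases hK : (E ∩ Metric.sphere (0 : EuclideanSpace ℝ (Fin p)) 1).Nonempty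
    · obtain ⟨y₀, hy₀, hmin⟩ :=
        ((isCompact_sphere (0 : EuclideanSpace ℝ (Fin p)) 1).inter_left hEc).exists_isMinOn hK
          (show Continuous fun t : EuclideanSpace ℝ (Fin p) => ⟪x, t⟫ from continuous_const.inner continuous_id).continuousOn
      have hy₀0 : y₀ ≠ 0 := by
        intro h
        have := hy₀.2
        rw [h] at this
        simp at this
      have hδ : 0 < ⟪x, y₀⟫ := hx y₀ hy₀.1 hy₀0
      rw [mem_interior]
      refine ⟨Metric.ball x ⟪x, y₀⟫, ?_, Metric.isOpen_ball, Metric.mem_ball_self hδ⟩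
      intro x' hx'
      rw [hmem x']
      intro y hy
      rcases eq_or_ne y 0 with rfl | hy0
      · simp
      · have hny : 0 < ‖y‖ := norm_pos_iff.mpr hy0
        set u := ‖y‖⁻¹ • y with hu
        have huE : u ∈ E ∩ Metric.sphere (0 : EuclideanSpace ℝ (Fin p)) 1 := by
          refine ⟨hcone y hy _ (inv_nonneg.mpr hny.le), ?_⟩
          simp [hu, norm_smul, abs_of_nonneg (inv_nonneg.mpr hny.le),
            inv_mul_cancel₀ (ne_of_gt hny)]
        have h1 : ⟪x, y₀⟫ ≤ ⟪x, u⟫ := hmin huE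
        have h2 : ‖u‖ = 1 := by simpa using huE.2
        have h3 : -‖x' - x‖ ≤ ⟪x' - x, u⟫ := by
          have := abs_real_inner_le_norm (x' - x) u
          rw [h2, mul_one] at this
          linarith [abs_le.mp this]
        have h4 : ‖x' - x‖ < ⟪x, y₀⟫ := by
          rw [← dist_eq_norm]
          exact Metric.mem_ball.mp hx'
        have h5 : 0 < ⟪x', u⟫ := by
          have : ⟪x', u⟫ = ⟪x, u⟫ + ⟪x' - x, u⟫ := by rw [← inner_add_left, add_sub_cancel]
          rw [this]
          linarith
        have h6 : ⟪x', y⟫ = ‖y‖ * ⟪x', u⟫ := by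
          rw [hu, real_inner_smul_right, ← mul_assoc, mul_inv_cancel₀ (ne_of_gt hny), one_mul]
        rw [h6]
        positivity
    · have hE0 : ∀ y ∈ E, y = 0 := by
        intro y hy
        by_contra hy0
        have hny : 0 < ‖y‖ := norm_pos_iff.mpr hy0
        exact hK ⟨‖y‖⁻¹ • y, hcone y hy _ (inv_nonneg.mpr hny.le), by
          simp [norm_smul, abs_of_nonneg (inv_nonneg.mpr hny.le),
            inv_mul_cancel₀ (ne_of_gt hny)]⟩
      have : E = Set.univ := Set.eq_univ_of_forall fun z => (hmem z).mpr
        (fun y hy => by rw [hE0 y hy]; simp)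
      rw [this, interior_univ]
      trivial
end
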